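/- arXiv:2302.12195 — 5 statements merged into one kernel-verified Lean document; each statement's English description precedes it below -/
import Mathlib

section
/- The operator T_Π is monotone: if I₁ ≼ I₂ are interpretations such that T_Π(I₁) and T_Π(I₂) are both defined, then T_Π(I₁) ≼ T_Π(I₂). -/
/-- A ground GAP rule: a head literal (element of `A × Bool`) with a head
annotation in `T`, together with a finite set of body pairs of literals
with annotations. -/
structure GAPRule (A T : Type*) where
  head : A × Bool
  headAnn : T
  body : Set ((A × Bool) × T)
  body_finite : body.Finite

/-- An interpretation `I` satisfies the annotated literal `ℓ:μ` iff `μ ⊑ I ℓ`. -/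
def satLit {A T : Type*} [PartialOrder T] (I : A × Bool → T) (ℓ : A × Bool) (μ : T) : Prop :=
  μ ≤ I ℓ

/-- An interpretation satisfies a rule iff it satisfies the head annotated
literal or fails to satisfy some body annotated literal. -/
def satRule {A T : Type*} [PartialOrder T] (I : A × Bool → T) (r : GAPRule A T) : Prop :=
  satLit I r.head r.headAnn ∨ ∃ p ∈ r.body, ¬ satLit I p.1 p.2

/-- `I` is a model of a program `P` iff it satisfies every rule of `P`. -/
def isModel {A T : Type*} [PartialOrder T] (I : A × Bool → T) (P : Set (GAPRule A T)) : Prop :=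
  ∀ r ∈ P, satRule I r

/-- `annoSet P I ℓ = {I ℓ} ∪ {μ₀ : some rule of P has head ℓ:μ₀ and I satisfies
every body annotated literal of that rule}`. -/
def annoSet {A T : Type*} [PartialOrder T] (P : Set (GAPRule A T)) (I : A × Bool → T)
    (ℓ : A × Bool) : Set T :=
  {I ℓ} ∪ {μ | ∃ r ∈ P, r.head = ℓ ∧ r.headAnn = μ ∧ ∀ p ∈ r.body, satLit I p.1 p.2}

/-- The operator `T_Π` is monotone: if `I₁ ≼ I₂` (pointwise) and
`T_Π(I₁) = J₁` and `T_Π(I₂) = J₂` are both defined (i.e. `J₁ ℓ` and `J₂ ℓ` are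
the least upper bounds of the corresponding annotation sets), then `J₁ ≼ J₂`. -/
theorem TOp_monotone {A T : Type*} [Fintype A] [Nonempty A] [PartialOrder T]
    (P : Set (GAPRule A T)) (hfin : P.Finite)
    (I₁ I₂ J₁ J₂ : A × Bool → T)
    (hle : ∀ ℓ : A × Bool, I₁ ℓ ≤ I₂ ℓ)
    (h1 : ∀ ℓ : A × Bool, IsLUB (annoSet P I₁ ℓ) (J₁ ℓ))
    (h2 : ∀ ℓ : A × Bool, IsLUB (annoSet P I₂ ℓ) (J₂ ℓ)) :
    ∀ ℓ : A × Bool, J₁ ℓ ≤ J₂ ℓ := by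
  intro ℓ
  refine (h1 ℓ).2 ?_
  intro μ hμ
  rcases hμ with h | ⟨r, hrP, hhead, hann, hbody⟩
  · calc μ = I₁ ℓ := h
      _ ≤ I₂ ℓ := hle ℓ
      _ ≤ J₂ ℓ := (h2 ℓ).1 (Or.inl rfl)
  · exact (h2 ℓ).1 (Or.inr ⟨r, hrP, hhead, hann,
      fun p hp => le_trans (hbody p hp) (hle p.1)⟩)
end

section
/- If M is any model of Π and i ∈ ℕ is such that the iterates T_Π↑0, T_Π↑1, …, T_Π↑i are all defined, then T_Π↑i ≼ M; that is, every defined iterate of the fixpoint operator starting from the bottom interpretation lies below every model of Π. -/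
/-- If `M` is any model of `P` and the iterates
`T_Π↑0, …, T_Π↑i` are all defined (`seq 0` is the bottom interpretation and
`seq (k+1) = T_Π(seq k)` for all `k < i`), then `T_Π↑i ≼ M` pointwise. -/
theorem iterate_le_model {A T : Type*} [Fintype A] [Nonempty A]
    [PartialOrder T] [OrderBot T]
    (P : Set (GAPRule A T)) (hfin : P.Finite)
    (M : A × Bool → T) (hM : isModel M P)
    (i : ℕ) (seq : ℕ → (A × Bool → T))
    (h0 : seq 0 = fun _ : A × Bool => (⊥ : T))
    (hstep : ∀ k, k < i → ∀ ℓ : A × Bool, IsLUB (annoSet P (seq k) ℓ) (seq (k + 1) ℓ)) :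
    ∀ ℓ : A × Bool, seq i ℓ ≤ M ℓ := by
  have key : ∀ k, k ≤ i → ∀ ℓ, seq k ℓ ≤ M ℓ := by
    intro k
    induction k with
    | zero => intro _ ℓ; rw [h0]; exact bot_le
    | succ n ih =>
      intro hki ℓ
      have ihn := ih (Nat.le_of_succ_le hki)
      have hlub := hstep n (Nat.lt_of_succ_le hki) ℓ
      apply hlub.2
      intro μ hμ
      rcases hμ with hμ | ⟨r, hrP, hhead, hann, hbody⟩
      · rw [Set.mem_singleton_iff] at hμ; rw [hμ]; exact ihn ℓ
      · have hsat : ∀ p ∈ r.body, satLit M p.1 p.2 := by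
          intro p hp
          exact le_trans (hbody p hp) (ihn p.1)
        rcases hM r hrP with h | ⟨p, hp, hns⟩
        · rw [← hann, ← hhead]; exact h
        · exact absurd (hsat p hp) hns
  exact key i le_rfl
end

section
/- Suppose (T, ⊑) is finite with least element ⊥ and any two elements of T having a common upper bound are comparable, and suppose the program Π is consistent. Then T_Π↑i is defined for every i ∈ ℕ, the sequence (T_Π↑i) is increasing in the pointwise order, it is eventually constant with limit I* satisfying T_Π(I*) = I*, and I* is the least model of Π (I* is a model of Π and I* ≼ M for every model M of Π). -/
/-!
Below any model `M`, every annotation set `annoSet P I ℓ` is bounded by `M ℓ`; since elements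
with a common upper bound are comparable and `T` is finite, such a set has a greatest element,
so `T_Π` is defined there and stays below `M`. Hence the iterates from `⊥` form an increasing
sequence below every model; in the finite poset of interpretations it stabilises, and a fixed
point of `T_Π` is a model, hence the least one.
-/

section

variable {A T : Type*} [PartialOrder T] {P : Set (GAPRule A T)}

lemma annoSet_subset_Iic_of_isModel {I M : A × Bool → T} (hM : isModel M P) (hIM : I ≤ M)
    (ℓ : A × Bool) : annoSet P I ℓ ⊆ Set.Iic (M ℓ) := by
  rintro μ (rfl | ⟨r, hrP, rfl, rfl, hbody⟩)
  · exact hIM _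
  · rcases hM r hrP with hhead | ⟨p, hp, hfail⟩
    · exact hhead
    · exact absurd ((hbody p hp).trans (hIM p.1)) hfail

lemma isModel_of_annoSet_subset_Iic {I : A × Bool → T}
    (h : ∀ ℓ, annoSet P I ℓ ⊆ Set.Iic (I ℓ)) : isModel I P := by
  intro r hrP
  refine or_iff_not_imp_right.2 fun hbody => h r.head (Or.inr ⟨r, hrP, rfl, rfl, ?_⟩)
  exact fun p hp => not_not.1 fun hfail => hbody ⟨p, hp, hfail⟩

open Classical in
/-- `T_Π`, with the supremum taken as a greatest element. Where no greatest element exists the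
value `I ℓ` is a placeholder; it is never reached below a model. -/
noncomputable def gapStep (P : Set (GAPRule A T)) (I : A × Bool → T) : A × Bool → T :=
  fun ℓ => if h : ∃ m, IsGreatest (annoSet P I ℓ) m then h.choose else I ℓ

noncomputable def gapIterate [OrderBot T] (P : Set (GAPRule A T)) : ℕ → A × Bool → T
  | 0 => ⊥
  | i + 1 => gapStep P (gapIterate P i)

lemma gapStep_isGreatest {I : A × Bool → T} {ℓ : A × Bool}
    (h : ∃ m, IsGreatest (annoSet P I ℓ) m) : IsGreatest (annoSet P I ℓ) (gapStep P I ℓ) := by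
  classical
  rw [gapStep, dif_pos h]
  exact h.choose_spec

end

lemma Set.Finite.exists_isGreatest_of_bddAbove {T : Type*} [PartialOrder T]
    (hcomp : ∀ a b : T, (∃ c : T, a ≤ c ∧ b ≤ c) → a ≤ b ∨ b ≤ a)
    {S : Set T} (hS : S.Finite) (hne : S.Nonempty) (hbdd : BddAbove S) :
    ∃ m, IsGreatest S m := by
  obtain ⟨c, hc⟩ := hbdd
  obtain ⟨m, hmS, hmax⟩ := hS.exists_maximal hne
  refine ⟨m, hmS, fun x hx => ?_⟩
  rcases hcomp x m ⟨c, hc hx, hc hmS⟩ with hxm | hmx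
  · exact hxm
  · exact hmax hx hmx

section Iterates

variable {A T : Type*} [PartialOrder T] [Finite T]
  (hcomp : ∀ a b : T, (∃ c : T, a ≤ c ∧ b ≤ c) → a ≤ b ∨ b ≤ a)
  {P : Set (GAPRule A T)}
include hcomp

lemma gapStep_isGreatest_of_le_model {I M : A × Bool → T} (hM : isModel M P) (hIM : I ≤ M)
    (ℓ : A × Bool) : IsGreatest (annoSet P I ℓ) (gapStep P I ℓ) :=
  gapStep_isGreatest <| (Set.toFinite _).exists_isGreatest_of_bddAbove hcomp
    ⟨I ℓ, Or.inl rfl⟩ ⟨M ℓ, annoSet_subset_Iic_of_isModel hM hIM ℓ⟩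

variable [OrderBot T]

lemma gapIterate_le_of_isModel {M : A × Bool → T} (hM : isModel M P) :
    ∀ i, gapIterate P i ≤ M
  | 0 => bot_le
  | i + 1 => fun ℓ => annoSet_subset_Iic_of_isModel hM (gapIterate_le_of_isModel hM i) ℓ
      (gapStep_isGreatest_of_le_model hcomp hM (gapIterate_le_of_isModel hM i) ℓ).1

lemma gapIterate_succ_isGreatest {M : A × Bool → T} (hM : isModel M P) (i : ℕ)
    (ℓ : A × Bool) :
    IsGreatest (annoSet P (gapIterate P i) ℓ) (gapIterate P (i + 1) ℓ) :=
  gapStep_isGreatest_of_le_model hcomp hM (gapIterate_le_of_isModel hcomp hM i) ℓ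

lemma monotone_gapIterate {M : A × Bool → T} (hM : isModel M P) : Monotone (gapIterate P) :=
  monotone_nat_of_le_succ fun i ℓ => (gapIterate_succ_isGreatest hcomp hM i ℓ).2 (Or.inl rfl)

end Iterates

theorem iterates_converge_to_least_model_general {A T : Type*} [Fintype A]
    [PartialOrder T] [Fintype T] [OrderBot T]
    (hcomp : ∀ a b : T, (∃ c : T, a ≤ c ∧ b ≤ c) → a ≤ b ∨ b ≤ a)
    (P : Set (GAPRule A T))
    (hcons : ∃ M : A × Bool → T, isModel M P) :
    ∃ seq : ℕ → (A × Bool → T),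
      seq 0 = (fun _ : A × Bool => (⊥ : T)) ∧
      (∀ (i : ℕ) (ℓ : A × Bool), IsLUB (annoSet P (seq i) ℓ) (seq (i + 1) ℓ)) ∧
      (∀ i j : ℕ, i ≤ j → ∀ ℓ : A × Bool, seq i ℓ ≤ seq j ℓ) ∧
      ∃ (N : ℕ) (Istar : A × Bool → T),
        (∀ i : ℕ, N ≤ i → seq i = Istar) ∧
        (∀ ℓ : A × Bool, IsLUB (annoSet P Istar ℓ) (Istar ℓ)) ∧
        isModel Istar P ∧
        (∀ M : A × Bool → T, isModel M P → ∀ ℓ : A × Bool, Istar ℓ ≤ M ℓ) := by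
  obtain ⟨M, hM⟩ := hcons
  have hgreatest := gapIterate_succ_isGreatest hcomp hM
  have hmono := monotone_gapIterate hcomp hM
  obtain ⟨N, hstable⟩ := WellFoundedGT.monotone_chain_condition ⟨gapIterate P, hmono⟩
  have hfix : gapIterate P (N + 1) = gapIterate P N := (hstable (N + 1) N.le_succ).symm
  have hfixGreatest (ℓ : A × Bool) :
      IsGreatest (annoSet P (gapIterate P N) ℓ) (gapIterate P N ℓ) :=
    hfix ▸ hgreatest N ℓ
  refine ⟨gapIterate P, rfl, fun i ℓ => (hgreatest i ℓ).isLUB, fun i j hij => hmono hij, N,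
    gapIterate P N, fun i hi => (hstable i hi).symm, fun ℓ => (hfixGreatest ℓ).isLUB,
    isModel_of_annoSet_subset_Iic fun ℓ => (hfixGreatest ℓ).2,
    fun M' hM' => gapIterate_le_of_isModel hcomp hM' N⟩

/-- Suppose `T` is finite with least element `⊥`, any two elements
of `T` having a common upper bound are comparable, and the program `P` is
consistent.  Then all iterates `T_Π↑i` are defined, the sequence of iterates is
increasing, it is eventually constant with limit `I*` satisfying
`T_Π(I*) = I*`, and `I*` is the least model of `P`. -/
theorem iterates_converge_to_least_model {A T : Type*} [Fintype A] [Nonempty A]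
    [PartialOrder T] [Fintype T] [OrderBot T]
    (hcomp : ∀ a b : T, (∃ c : T, a ≤ c ∧ b ≤ c) → a ≤ b ∨ b ≤ a)
    (P : Set (GAPRule A T)) (hfin : P.Finite)
    (hcons : ∃ M : A × Bool → T, isModel M P) :
    ∃ seq : ℕ → (A × Bool → T),
      seq 0 = (fun _ : A × Bool => (⊥ : T)) ∧
      (∀ (i : ℕ) (ℓ : A × Bool), IsLUB (annoSet P (seq i) ℓ) (seq (i + 1) ℓ)) ∧
      (∀ i j : ℕ, i ≤ j → ∀ ℓ : A × Bool, seq i ℓ ≤ seq j ℓ) ∧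
      ∃ (N : ℕ) (Istar : A × Bool → T),
        (∀ i : ℕ, N ≤ i → seq i = Istar) ∧
        (∀ ℓ : A × Bool, IsLUB (annoSet P Istar ℓ) (Istar ℓ)) ∧
        isModel Istar P ∧
        (∀ M : A × Bool → T, isModel M P → ∀ ℓ : A × Bool, Istar ℓ ≤ M ℓ) :=
  iterates_converge_to_least_model_general hcomp P hcons
end

section
/- Suppose (T, ⊑) is finite with least element ⊥ and any two elements of T having a common upper bound are comparable, the program Π is consistent, and I* is the least fixpoint of T_Π (the eventually-constant limit of the iterates T_Π↑i). Then for every literal ℓ and annotation μ ∈ T, Π entails ℓ:μ if and only if μ ⊑ I*(ℓ). -/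
/-- Suppose `T` is finite with least element `⊥`, any two elements
of `T` having a common upper bound are comparable, the program `P` is
consistent, and `I*` is the least fixpoint of `T_Π`, obtained as the
eventually-constant limit of the iterates `T_Π↑i`.  Then for every literal `ℓ`
and annotation `μ`, `P` entails `ℓ:μ` iff `μ ⊑ I*(ℓ)`. -/
theorem entails_iff_le_lfp {A T : Type*} [Fintype A] [Nonempty A]
    [PartialOrder T] [Fintype T] [OrderBot T]
    (hcomp : ∀ a b : T, (∃ c : T, a ≤ c ∧ b ≤ c) → a ≤ b ∨ b ≤ a)
    (P : Set (GAPRule A T)) (hfin : P.Finite)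
    (hcons : ∃ M : A × Bool → T, isModel M P)
    (seq : ℕ → (A × Bool → T))
    (h0 : seq 0 = fun _ : A × Bool => (⊥ : T))
    (hstep : ∀ (i : ℕ) (ℓ : A × Bool), IsLUB (annoSet P (seq i) ℓ) (seq (i + 1) ℓ))
    (Istar : A × Bool → T)
    (hlim : ∃ N : ℕ, ∀ i : ℕ, N ≤ i → seq i = Istar) :
    ∀ (ℓ : A × Bool) (μ : T),
      (∀ I : A × Bool → T, isModel I P → μ ≤ I ℓ) ↔ μ ≤ Istar ℓ := by
  obtain ⟨N, hN⟩ := hlim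
  -- Istar is a fixpoint: IsLUB (annoSet P Istar ℓ) (Istar ℓ)
  have hfix : ∀ ℓ, IsLUB (annoSet P Istar ℓ) (Istar ℓ) := by
    intro ℓ
    have h1 := hstep N ℓ
    rw [hN N le_rfl, hN (N+1) (Nat.le_succ N)] at h1
    exact h1
  -- Istar is a model
  have hmodel : isModel Istar P := by
    intro r hr
    by_cases hb : ∀ p ∈ r.body, satLit Istar p.1 p.2
    · left
      exact (hfix r.head).1 (Or.inr ⟨r, hr, rfl, rfl, hb⟩)
    · right
      push_neg at hb
      obtain ⟨p, hp, hps⟩ := hb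
      exact ⟨p, hp, hps⟩
  -- Istar is below every model
  have hle : ∀ M, isModel M P → ∀ ℓ, Istar ℓ ≤ M ℓ := by
    intro M hM
    have key : ∀ i ℓ, seq i ℓ ≤ M ℓ := by
      intro i
      induction i with
      | zero => intro ℓ; rw [h0]; exact bot_le
      | succ n ih =>
        intro ℓ
        refine (hstep n ℓ).2 ?_
        rintro μ (hμ | ⟨r, hr, hh, hha, hb⟩)
        · rw [Set.mem_singleton_iff] at hμ; subst hμ; exact ih ℓ
        · have hbM : ∀ p ∈ r.body, satLit M p.1 p.2 := fun p hp =>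
            le_trans (hb p hp) (ih p.1)
          rcases hM r hr with h | ⟨p, hp, hps⟩
          · subst hh hha; exact h
          · exact absurd (hbM p hp) hps
    intro ℓ
    rw [← hN N le_rfl]
    exact key N ℓ
  intro ℓ μ
  constructor
  · intro h; exact h Istar hmodel
  · intro h I hI; exact le_trans h (hle I hI ℓ)
end

section
/- Suppose (T, ⊑) is finite with least element ⊥ and any two elements of T having a common upper bound are comparable, and suppose the program Π is consistent. Let x = height(T) · |L|, where height(T) is the maximum number of elements of a chain in T and |L| is the number of ground literals. Then T_Π↑x equals the least fixpoint of T_Π; that is, the fixpoint iteration converges within height(T) · |L| applications of the operator. -/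
open Order

theorem exists_isGreatest_of_comparable {T : Type*} [PartialOrder T]
    (hcomp : ∀ a b : T, (∃ c : T, a ≤ c ∧ b ≤ c) → a ≤ b ∨ b ≤ a)
    {S : Set T} (hfin : S.Finite) (hne : S.Nonempty) (hbdd : BddAbove S) :
    ∃ t, IsGreatest S t := by
  obtain ⟨c, hc⟩ := hbdd
  obtain ⟨t, htS, hmax⟩ := hfin.exists_maximal hne
  refine ⟨t, htS, fun s hs => ?_⟩
  rcases hcomp s t ⟨c, hc hs, hc htS⟩ with hst | hts
  · exact hst
  · exact hmax hs hts

theorem LTSeries.length_lt_of_forall_chain_card_le {α : Type*} [Preorder α] {h : ℕ}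
    (hchain : ∀ s : Finset α, IsChain (· ≤ ·) (↑s : Set α) → s.card ≤ h) (p : LTSeries α) :
    p.length < h := by
  classical
  have hcard := hchain (Finset.univ.image p) (by
    simpa only [Finset.coe_image, Finset.coe_univ, Set.image_univ]
      using p.strictMono.monotone.isChain_range)
  rw [Finset.card_image_of_injective _ p.strictMono.injective, Finset.card_univ,
    Fintype.card_fin] at hcard
  omega

theorem Order.height_le_of_forall_chain_card_le {α : Type*} [Preorder α] {h : ℕ}
    (hchain : ∀ s : Finset α, IsChain (· ≤ ·) (↑s : Set α) → s.card ≤ h) (a : α) :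
    height a ≤ h :=
  height_le fun p _ => by exact_mod_cast (p.length_lt_of_forall_chain_card_le hchain).le

theorem sum_height_add_one_le_of_lt {ι α : Type*} [Fintype ι] [Preorder α] {x y : ι → α}
    (hxy : x < y) :
    ∑ i, height (x i) + 1 ≤ ∑ i, height (y i) := by
  classical
  obtain ⟨hle, i, hi⟩ := Pi.lt_def.mp hxy
  rw [← Finset.add_sum_erase _ _ (Finset.mem_univ i),
    ← Finset.add_sum_erase _ (fun j => height (y j)) (Finset.mem_univ i), add_right_comm]
  exact add_le_add (height_add_one_le hi)
    (Finset.sum_le_sum fun j _ => height_mono (hle j))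

theorem Monotone.exists_le_card_mul_eq_succ {ι α : Type*} [Fintype ι] [PartialOrder α] {n : ℕ}
    (hheight : ∀ a : α, height a ≤ n) {f : ℕ → ι → α} (hf : Monotone f) :
    ∃ k ≤ n * Fintype.card ι, f (k + 1) = f k := by
  by_contra! hne
  set N := n * Fintype.card ι
  have hgrow : ∀ k ≤ N + 1, (k : ℕ∞) ≤ ∑ i, height (f k i) := by
    intro k hk
    induction k with
    | zero => simp
    | succ k ih =>
      have hlt : f k < f (k + 1) := (hf k.le_succ).lt_of_ne (hne k (by omega)).symm
      calc ((k + 1 : ℕ) : ℕ∞) = k + 1 := Nat.cast_succ k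
        _ ≤ ∑ i, height (f k i) + 1 := by gcongr; exact ih (by omega)
        _ ≤ _ := sum_height_add_one_le_of_lt hlt
  have hbound : ∑ i, height (f (N + 1) i) ≤ N := by
    calc ∑ i, height (f (N + 1) i) ≤ ∑ _i : ι, (n : ℕ∞) :=
          Finset.sum_le_sum fun i _ => hheight _
      _ = N := by simp [N, mul_comm]
  have := (hgrow (N + 1) le_rfl).trans hbound
  norm_cast at this
  omega

section ImmediateConsequence

variable {A T : Type*} [PartialOrder T] {P : Set (GAPRule A T)}

theorem upperBounds_annoSet_subset {I J : A × Bool → T} (hIJ : I ≤ J) (ℓ : A × Bool) :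
    upperBounds (annoSet P J ℓ) ⊆ upperBounds (annoSet P I ℓ) := by
  rintro u hu t (rfl | ⟨r, hr, hhead, hann, hbody⟩)
  · exact (hIJ _).trans (hu (Or.inl rfl))
  · exact hu (Or.inr ⟨r, hr, hhead, hann, fun p hp => (hbody p hp).trans (hIJ p.1)⟩)

theorem le_of_isLUB_annoSet {I J : A × Bool → T} (hIJ : I ≤ J) {ℓ : A × Bool} {u v : T}
    (hu : IsLUB (annoSet P I ℓ) u) (hv : IsLUB (annoSet P J ℓ) v) : u ≤ v :=
  hu.2 (upperBounds_annoSet_subset hIJ ℓ hv.1)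

theorem isModel.mem_upperBounds_annoSet {M I : A × Bool → T} (hM : isModel M P) (hIM : I ≤ M)
    (ℓ : A × Bool) : M ℓ ∈ upperBounds (annoSet P I ℓ) := by
  rintro t (rfl | ⟨r, hr, rfl, rfl, hbody⟩)
  · exact hIM _
  · rcases hM r hr with hhead | ⟨p, hp, hnot⟩
    · exact hhead
    · exact absurd ((hbody p hp).trans (hIM p.1)) hnot

variable (P) in
/-- The operator `T_Π`; where `annoSet P I ℓ` has no least upper bound it keeps `I ℓ`. -/
noncomputable def tpOp (I : A × Bool → T) : A × Bool → T := fun ℓ =>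
  open Classical in
  if h : ∃ t, IsLUB (annoSet P I ℓ) t then h.choose else I ℓ

theorem isLUB_tpOp {I : A × Bool → T} {ℓ : A × Bool} (h : ∃ t, IsLUB (annoSet P I ℓ) t) :
    IsLUB (annoSet P I ℓ) (tpOp P I ℓ) := by
  classical
  rw [tpOp, dif_pos h]
  exact h.choose_spec

variable [Finite T] (hcomp : ∀ a b : T, (∃ c : T, a ≤ c ∧ b ≤ c) → a ≤ b ∨ b ≤ a)
  {M : A × Bool → T} (hM : isModel M P)
include hcomp hM

theorem isLUB_tpOp_of_le_model {I : A × Bool → T} (hIM : I ≤ M) (ℓ : A × Bool) :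
    IsLUB (annoSet P I ℓ) (tpOp P I ℓ) := by
  obtain ⟨t, ht⟩ := exists_isGreatest_of_comparable hcomp (Set.toFinite _)
    ⟨I ℓ, Or.inl rfl⟩ ⟨M ℓ, hM.mem_upperBounds_annoSet hIM ℓ⟩
  exact isLUB_tpOp ⟨t, ht.isLUB⟩

theorem tpOp_le_model {I : A × Bool → T} (hIM : I ≤ M) : tpOp P I ≤ M := fun ℓ =>
  (isLUB_tpOp_of_le_model hcomp hM hIM ℓ).2 (hM.mem_upperBounds_annoSet hIM ℓ)

variable [OrderBot T]

theorem iterate_tpOp_le_model (i : ℕ) : (tpOp P)^[i] ⊥ ≤ M := by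
  induction i with
  | zero => exact bot_le
  | succ i ih => rw [Function.iterate_succ_apply']; exact tpOp_le_model hcomp hM ih

theorem isLUB_iterate_tpOp (i : ℕ) (ℓ : A × Bool) :
    IsLUB (annoSet P ((tpOp P)^[i] ⊥) ℓ) ((tpOp P)^[i + 1] ⊥ ℓ) := by
  rw [Function.iterate_succ_apply']
  exact isLUB_tpOp_of_le_model hcomp hM (iterate_tpOp_le_model hcomp hM i) ℓ

theorem monotone_iterate_tpOp : Monotone fun i => (tpOp P)^[i] (⊥ : A × Bool → T) := by
  refine monotone_nat_of_le_succ fun i => ?_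
  induction i with
  | zero => exact bot_le
  | succ i ih =>
    exact fun ℓ => le_of_isLUB_annoSet ih (isLUB_iterate_tpOp hcomp hM i ℓ)
      (isLUB_iterate_tpOp hcomp hM (i + 1) ℓ)

theorem iterate_tpOp_le_of_isFixedPt {J : A × Bool → T}
    (hJ : ∀ ℓ, IsLUB (annoSet P J ℓ) (J ℓ)) (i : ℕ) : (tpOp P)^[i] ⊥ ≤ J := by
  induction i with
  | zero => exact bot_le
  | succ i ih => exact fun ℓ => le_of_isLUB_annoSet ih (isLUB_iterate_tpOp hcomp hM i ℓ) (hJ ℓ)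

end ImmediateConsequence

theorem iterate_converges_within_height_mul_card_general {A T : Type*} [Fintype A]
    [PartialOrder T] [Fintype T] [OrderBot T]
    (hcomp : ∀ a b : T, (∃ c : T, a ≤ c ∧ b ≤ c) → a ≤ b ∨ b ≤ a)
    (P : Set (GAPRule A T))
    (hcons : ∃ M : A × Bool → T, isModel M P)
    (h : ℕ)
    (hchain_le : ∀ s : Finset T, IsChain (· ≤ ·) (↑s : Set T) → s.card ≤ h) :
    ∃ seq : ℕ → (A × Bool → T),
      seq 0 = (fun _ : A × Bool => (⊥ : T)) ∧
      (∀ (i : ℕ) (ℓ : A × Bool), IsLUB (annoSet P (seq i) ℓ) (seq (i + 1) ℓ)) ∧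
      (∀ ℓ : A × Bool,
        IsLUB (annoSet P (seq (h * Fintype.card (A × Bool))) ℓ)
          (seq (h * Fintype.card (A × Bool)) ℓ)) ∧
      (∀ J : A × Bool → T, (∀ ℓ : A × Bool, IsLUB (annoSet P J ℓ) (J ℓ)) →
        ∀ ℓ : A × Bool, seq (h * Fintype.card (A × Bool)) ℓ ≤ J ℓ) := by
  obtain ⟨M, hM⟩ := hcons
  set N := h * Fintype.card (A × Bool)
  obtain ⟨k, hkN, hk⟩ := (monotone_iterate_tpOp hcomp hM).exists_le_card_mul_eq_succ
    (height_le_of_forall_chain_card_le hchain_le)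
  have hfixed : Function.IsFixedPt (tpOp P) ((tpOp P)^[k] ⊥) :=
    (Function.iterate_succ_apply' _ k _).symm.trans hk
  have hstable : ∀ m ≥ k, (tpOp P)^[m] ⊥ = (tpOp P)^[k] ⊥ := fun m hm => by
    obtain ⟨d, rfl⟩ := Nat.exists_eq_add_of_le' hm
    rw [Function.iterate_add_apply, (hfixed.iterate d).eq]
  refine ⟨fun i => (tpOp P)^[i] ⊥, rfl, isLUB_iterate_tpOp hcomp hM, fun ℓ => ?_,
    fun J hJ => iterate_tpOp_le_of_isFixedPt hcomp hM hJ N⟩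
  simpa only [hstable N hkN, hstable (N + 1) (by omega)]
    using isLUB_iterate_tpOp hcomp hM N ℓ

/-- Suppose `T` is finite with least element `⊥`, any two elements
of `T` with a common upper bound are comparable, and `P` is consistent.  Let
`h` be the maximum number of elements of a chain in `T` and let
`x = h * |L|` where `L = A × Bool` is the set of ground literals.  Then the
iterates `T_Π↑i` are all defined and `T_Π↑x` is the least fixpoint of `T_Π`:
it is a fixpoint, and it lies below every fixpoint. -/
theorem iterate_converges_within_height_mul_card {A T : Type*} [Fintype A] [Nonempty A]
    [PartialOrder T] [Fintype T] [OrderBot T]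
    (hcomp : ∀ a b : T, (∃ c : T, a ≤ c ∧ b ≤ c) → a ≤ b ∨ b ≤ a)
    (P : Set (GAPRule A T)) (hfin : P.Finite)
    (hcons : ∃ M : A × Bool → T, isModel M P)
    (h : ℕ)
    (hchain_le : ∀ s : Finset T, IsChain (· ≤ ·) (↑s : Set T) → s.card ≤ h)
    (hchain_max : ∃ s : Finset T, IsChain (· ≤ ·) (↑s : Set T) ∧ s.card = h) :
    ∃ seq : ℕ → (A × Bool → T),
      seq 0 = (fun _ : A × Bool => (⊥ : T)) ∧
      (∀ (i : ℕ) (ℓ : A × Bool), IsLUB (annoSet P (seq i) ℓ) (seq (i + 1) ℓ)) ∧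
      (∀ ℓ : A × Bool,
        IsLUB (annoSet P (seq (h * Fintype.card (A × Bool))) ℓ)
          (seq (h * Fintype.card (A × Bool)) ℓ)) ∧
      (∀ J : A × Bool → T, (∀ ℓ : A × Bool, IsLUB (annoSet P J ℓ) (J ℓ)) →
        ∀ ℓ : A × Bool, seq (h * Fintype.card (A × Bool)) ℓ ≤ J ℓ) :=
  iterate_converges_within_height_mul_card_general hcomp P hcons h hchain_le
end
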